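/- In an idempotent residuated chain, for a strictly negative element b (b < 1), the element b^⋆ := b^ℓ ∧ b^r is the smallest element of the positive cone {x : 1 ≤ x} with respect to the monoidal preorder ⊑ such that b ⊏ b^⋆ (i.e., the ≤-largest positive a with b·a = a·b = b ≠ a). -/

import Mathlib

/-!
Residuation makes multiplication monotone, and `b ≤ 1` gives `1 ≤ b^ℓ, b^r`, so `b^⋆` is positive.
For a positive `s` with `b s ≤ 1`, idempotence squeezes `b s` between `b = b · 1 ≤ b s` and
`b s = b (b s) ≤ b · 1`; residuation turns `b b^r ≤ 1` and `b^ℓ b ≤ 1` into `b b^⋆ = b^⋆ b = b`.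
Conversely `b a = a b = b ≤ 1` residuates to `a ≤ b^r` and `a ≤ b^ℓ`.
-/

section Residuated

variable {A : Type*} [Monoid A] [PartialOrder A]

theorem mulLeftMono_of_residuated (ld : A → A → A)
    (resl : ∀ x y z : A, x * y ≤ z ↔ y ≤ ld x z) : MulLeftMono A :=
  ⟨fun x y z h => (resl x y (x * z)).mpr (h.trans ((resl x z (x * z)).mp le_rfl))⟩

theorem mulRightMono_of_residuated (rd : A → A → A)
    (resr : ∀ x y z : A, x * y ≤ z ↔ x ≤ rd z y) : MulRightMono A :=
  ⟨fun x y z h => (resr y x (z * x)).mpr (h.trans ((resr z x (z * x)).mp le_rfl))⟩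

theorem mul_eq_left_of_idempotent [MulLeftMono A] {b s : A} (idem : b * b = b)
    (hs : 1 ≤ s) (hbs : b * s ≤ 1) : b * s = b := by
  apply le_antisymm
  · calc b * s = b * (b * s) := by rw [← mul_assoc, idem]
      _ ≤ b * 1 := mul_le_mul_right hbs b
      _ = b := mul_one b
  · calc b = b * 1 := (mul_one b).symm
      _ ≤ b * s := mul_le_mul_right hs b

theorem mul_eq_right_of_idempotent [MulRightMono A] {b s : A} (idem : b * b = b)
    (hs : 1 ≤ s) (hsb : s * b ≤ 1) : s * b = b := by
  apply le_antisymm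
  · calc s * b = s * b * b := by rw [mul_assoc, idem]
      _ ≤ 1 * b := mul_le_mul_left hsb b
      _ = b := one_mul b
  · calc b = 1 * b := (one_mul b).symm
      _ ≤ s * b := mul_le_mul_left hs b

end Residuated

/-- In an idempotent residuated chain, for strictly negative `b`, the element
`b^⋆ = b^ℓ ∧ b^r` is the ≤-largest positive element `a` with `b·a = a·b = b ≠ a`. -/
theorem stmt13 {A : Type*} [LinearOrder A] [Monoid A]
    (ld rd : A → A → A)
    (resl : ∀ x y z : A, x * y ≤ z ↔ y ≤ ld x z)
    (resr : ∀ x y z : A, x * y ≤ z ↔ x ≤ rd z y)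
    (idem : ∀ x : A, x * x = x) :
    ∀ b : A, b < 1 →
      (1 ≤ rd 1 b ⊓ ld b 1 ∧
        b * (rd 1 b ⊓ ld b 1) = b ∧ (rd 1 b ⊓ ld b 1) * b = b ∧
        b ≠ rd 1 b ⊓ ld b 1) ∧
      (∀ a : A, 1 ≤ a → b * a = b → a * b = b → b ≠ a → a ≤ rd 1 b ⊓ ld b 1) := by
  have := mulLeftMono_of_residuated ld resl
  have := mulRightMono_of_residuated rd resr
  intro b hb
  have hstar : 1 ≤ rd 1 b ⊓ ld b 1 :=
    le_inf ((resr 1 b 1).mp (by rw [one_mul]; exact hb.le))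
      ((resl b 1 1).mp (by rw [mul_one]; exact hb.le))
  refine ⟨⟨hstar, ?_, ?_, (hb.trans_le hstar).ne⟩, ?_⟩
  · exact mul_eq_left_of_idempotent (idem b) hstar ((resl _ _ _).mpr inf_le_right)
  · exact mul_eq_right_of_idempotent (idem b) hstar ((resr _ _ _).mpr inf_le_left)
  · intro a _ hba hab _
    exact le_inf ((resr a b 1).mp (hab.trans_le hb.le)) ((resl b a 1).mp (hba.trans_le hb.le))
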